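/- arXiv:1911.01117 — 3 statements merged into one kernel-verified Lean document; each statement's English description precedes it below -/
import Mathlib

section
/- Let d ≥ 2 be an integer, δ ∈ (0,1), and let N be a positive integer with N ≥ 36·ln(d)/δ². Let X be a binomial random variable with parameters N and p ∈ [0,1], and assume √p > δ. Then P[ |√p − √(X/N)| ≥ δ ] ≤ 1/d¹². -/
/-!
Write `s = √p`. If `√(X/N)` is at distance at least `δ` from `s`, then `X ≤ N (s - δ)²` or
`X ≥ N (s + δ)²`. Chernoff's bound for `X` at a threshold `N r²`, with the exponential tilt
`t = 2 log (r / s)`, gives the exponent `-N (2 r² log (r / s) - r² + s²) ≤ -N (r - s)²`, the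
last step being `log x ≥ 1 - 1/x`. Hence each tail is at most `exp (-N δ²) ≤ d⁻³⁶`.
-/

open Real MeasureTheory ProbabilityTheory
open scoped unitInterval NNReal

namespace ProbabilityTheory

lemma mgf_binomial (n : ℕ) (p : I) (t : ℝ) :
    mgf (fun k : ℕ => (k : ℝ)) Bin(n, p) t = (1 - p + p * exp t) ^ n := by
  rw [mgf, integral_binomial, ← Nat.range_succ_eq_Iic, add_comm (1 - (p : ℝ)), add_pow]
  refine Finset.sum_congr rfl fun k _ => ?_
  rw [smul_eq_mul, mul_pow, ← exp_nat_mul, mul_comm t]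
  ring

lemma mgf_binomial_le_exp (n : ℕ) (p : I) (t : ℝ) :
    mgf (fun k : ℕ => (k : ℝ)) Bin(n, p) t ≤ exp (n * p * (exp t - 1)) := by
  rw [mgf_binomial, mul_assoc, exp_nat_mul]
  gcongr
  · exact add_nonneg (unitInterval.one_minus_nonneg p) (mul_nonneg p.2.1 (exp_pos t).le)
  · linarith [add_one_le_exp (p * (exp t - 1))]

lemma binomial_real_ge_le_exp (n : ℕ) (p : I) {t : ℝ} (ht : 0 ≤ t) (a : ℝ) :
    Bin(n, p).real {k | a ≤ (k : ℝ)} ≤ exp (-t * a + n * p * (exp t - 1)) := by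
  rw [exp_add]
  exact (measure_ge_le_exp_mul_mgf a ht (integrable_binomial _)).trans
    (by gcongr; exact mgf_binomial_le_exp n p t)

lemma binomial_real_le_le_exp (n : ℕ) (p : I) {t : ℝ} (ht : t ≤ 0) (a : ℝ) :
    Bin(n, p).real {k | (k : ℝ) ≤ a} ≤ exp (-t * a + n * p * (exp t - 1)) := by
  rw [exp_add]
  exact (measure_le_le_exp_mul_mgf a ht (integrable_binomial _)).trans
    (by gcongr; exact mgf_binomial_le_exp n p t)

lemma chernoff_exponent_at_two_log_le {r s : ℝ} (hr : 0 < r) (hs : 0 < s) {n : ℝ} (hn : 0 ≤ n) :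
    -(2 * log (r / s)) * (n * r ^ 2) + n * s ^ 2 * (exp (2 * log (r / s)) - 1) ≤
      -(n * (r - s) ^ 2) := by
  have hexp : s ^ 2 * (exp (2 * log (r / s)) - 1) = r ^ 2 - s ^ 2 := by
    rw [← log_rpow (div_pos hr hs), exp_log (by positivity), div_rpow hr.le hs.le]
    norm_cast
    field_simp
  have hlog : r * (r - s) ≤ r ^ 2 * log (r / s) := by
    have := one_sub_inv_le_log_of_pos (div_pos hr hs)
    rw [inv_div] at this
    calc r * (r - s) = r ^ 2 * (1 - s / r) := by field_simp
      _ ≤ _ := by gcongr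
  linear_combination (2 * n) * hlog + n * hexp

lemma binomial_real_le_mul_sub_sq_le (n : ℕ) (p : I) {s δ : ℝ} (hps : (p : ℝ) = s ^ 2)
    (hδ : 0 ≤ δ) (hδs : δ < s) :
    Bin(n, p).real {k | (k : ℝ) ≤ n * (s - δ) ^ 2} ≤ exp (-(n * δ ^ 2)) := by
  have hr : 0 < s - δ := sub_pos.mpr hδs
  have hs : 0 < s := hδ.trans_lt hδs
  have ht : 2 * log ((s - δ) / s) ≤ 0 :=
    mul_nonpos_of_nonneg_of_nonpos zero_le_two
      (log_nonpos (div_pos hr hs).le ((div_le_one hs).mpr (by linarith)))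
  refine (binomial_real_le_le_exp n p ht _).trans (exp_le_exp.mpr ?_)
  rw [hps]
  convert chernoff_exponent_at_two_log_le hr hs (Nat.cast_nonneg n) using 3
  ring

lemma binomial_real_mul_add_sq_le_le (n : ℕ) (p : I) {s δ : ℝ} (hps : (p : ℝ) = s ^ 2)
    (hs : 0 < s) (hδ : 0 ≤ δ) :
    Bin(n, p).real {k | n * (s + δ) ^ 2 ≤ (k : ℝ)} ≤ exp (-(n * δ ^ 2)) := by
  have hr : 0 < s + δ := by linarith
  have ht : 0 ≤ 2 * log ((s + δ) / s) :=
    mul_nonneg zero_le_two (log_nonneg ((one_le_div hs).mpr (by linarith)))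
  refine (binomial_real_ge_le_exp n p ht _).trans (exp_le_exp.mpr ?_)
  rw [hps]
  convert chernoff_exponent_at_two_log_le hr hs (Nat.cast_nonneg n) using 3
  ring

end ProbabilityTheory

lemma PMF.map_val_toMeasure_binomial {p : ℝ≥0} (h : p ≤ 1) (n : ℕ) {q : I} (hq : (q : ℝ) = p) :
    (PMF.binomial p h n).toMeasure.map (fun k : Fin (n + 1) => (k : ℕ)) = Bin(n, q) := by
  refine Measure.ext_of_singleton fun k => ?_
  rw [Measure.map_apply .of_discrete (measurableSet_singleton k), binomial_singleton, hq]
  by_cases hk : k ≤ n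
  · have : (fun k : Fin (n + 1) => (k : ℕ)) ⁻¹' {k} = {Fin.ofNat (n + 1) k} := by
      ext i
      simp [Fin.ext_iff, Nat.mod_eq_of_lt (Nat.lt_succ_of_le hk)]
    rw [this, PMF.toMeasure_apply_singleton _ _ (measurableSet_singleton _),
      PMF.binomial_apply_of_le hk]
  · have : (fun k : Fin (n + 1) => (k : ℕ)) ⁻¹' {k} = ∅ := by
      ext i
      simp only [Set.mem_preimage, Set.mem_singleton_iff, Set.mem_empty_iff_false, iff_false]
      omega
    rw [this, measure_empty, Nat.choose_eq_zero_of_lt (by omega)]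
    simp

lemma sq_le_or_le_sq_of_le_abs_sub_sqrt {s δ x : ℝ} (hsδ : 0 < s + δ) (h : δ ≤ |s - √x|) :
    x ≤ (s - δ) ^ 2 ∨ (s + δ) ^ 2 ≤ x := by
  rcases le_abs'.mp h with h | h
  · exact .inr ((le_sqrt' hsδ).mp (by linarith))
  · exact .inl (sqrt_le_iff.mp (by linarith)).2

lemma two_mul_exp_neg_le_one_div_pow {d x : ℝ} (hd : 2 ≤ d) (hx : 36 * log d ≤ x) :
    2 * exp (-x) ≤ 1 / d ^ 12 := by
  have hd0 : 0 < d := by linarith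
  have hpow : d ^ 36 ≤ exp x := by
    rw [← exp_log hd0, ← exp_nat_mul]
    exact exp_le_exp.mpr (by push_cast; linarith)
  have h2 : 2 * d ^ 12 ≤ d ^ 36 := by
    have : 2 ≤ d ^ 24 := le_trans hd (le_self_pow₀ (by linarith) (by norm_num))
    nlinarith [pow_pos hd0 12]
  rw [exp_neg, ← div_eq_mul_inv, div_le_div_iff₀ (exp_pos x) (by positivity)]
  linarith

theorem binomial_sqrt_concentration_general
    (d : ℕ) (hd : 2 ≤ d) (δ : ℝ) (hδ0 : 0 < δ)
    (N : ℕ) (hN0 : 0 < N) (hN : 36 * Real.log d / δ ^ 2 ≤ (N : ℝ))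
    (p : ℝ) (hp0 : 0 ≤ p) (hp1 : p ≤ 1) (hpδ : δ < Real.sqrt p) :
    (PMF.binomial (Real.toNNReal p) (Real.toNNReal_le_one.mpr hp1) N).toMeasure
      {k : Fin (N + 1) | δ ≤ |Real.sqrt p - Real.sqrt (((k : ℕ) : ℝ) / (N : ℝ))|} ≤
      ENNReal.ofReal (1 / (d : ℝ) ^ 12) := by
  set s := √p
  have hps : ((⟨p, hp0, hp1⟩ : I) : ℝ) = s ^ 2 := (sq_sqrt hp0).symm
  have hN' : (0 : ℝ) < N := by exact_mod_cast hN0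
  have hNδ : 36 * log d ≤ N * δ ^ 2 := by rwa [div_le_iff₀ (by positivity)] at hN
  have hevent : {k : Fin (N + 1) | δ ≤ |s - √((k : ℕ) / N)|} ⊆ (fun k : Fin (N + 1) => (k : ℕ)) ⁻¹'
      ({k : ℕ | (k : ℝ) ≤ N * (s - δ) ^ 2} ∪ {k | N * (s + δ) ^ 2 ≤ (k : ℝ)}) := by
    intro k hk
    rcases sq_le_or_le_sq_of_le_abs_sub_sqrt (by linarith) hk with h | h
    · left; rwa [div_le_iff₀ hN', mul_comm] at h
    · right; rwa [le_div_iff₀ hN', mul_comm] at h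
  rw [ENNReal.le_ofReal_iff_toReal_le (measure_ne_top _ _) (by positivity), ← measureReal_def]
  calc _ ≤ Bin(N, ⟨p, hp0, hp1⟩).real
        ({k : ℕ | (k : ℝ) ≤ N * (s - δ) ^ 2} ∪ {k | N * (s + δ) ^ 2 ≤ (k : ℝ)}) := by
        rw [← PMF.map_val_toMeasure_binomial _ N (Real.coe_toNNReal p hp0).symm,
          map_measureReal_apply .of_discrete .of_discrete]
        exact measureReal_mono hevent
    _ ≤ _ := measureReal_union_le _ _
    _ ≤ exp (-(N * δ ^ 2)) + exp (-(N * δ ^ 2)) :=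
        add_le_add (binomial_real_le_mul_sub_sq_le N _ hps hδ0.le hpδ)
          (binomial_real_mul_add_sq_le_le N _ hps (hδ0.trans hpδ) hδ0.le)
    _ ≤ 1 / d ^ 12 := by
        rw [← two_mul]
        exact two_mul_exp_neg_le_one_div_pow (by exact_mod_cast hd) hNδ

/-- **Concentration of the estimated amplitude.** For `N ≥ 36 ln(d)/δ²` and a binomial
random variable `X` with parameters `N` and `p` with `√p > δ`,
`P[|√p - √(X/N)| ≥ δ] ≤ 1/d¹²`. -/
theorem binomial_sqrt_concentration
    (d : ℕ) (hd : 2 ≤ d) (δ : ℝ) (hδ0 : 0 < δ) (hδ1 : δ < 1)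
    (N : ℕ) (hN0 : 0 < N) (hN : 36 * Real.log d / δ ^ 2 ≤ (N : ℝ))
    (p : ℝ) (hp0 : 0 ≤ p) (hp1 : p ≤ 1) (hpδ : δ < Real.sqrt p) :
    (PMF.binomial (Real.toNNReal p) (Real.toNNReal_le_one.mpr hp1) N).toMeasure
      {k : Fin (N + 1) | δ ≤ |Real.sqrt p - Real.sqrt (((k : ℕ) : ℝ) / (N : ℝ))|} ≤
      ENNReal.ofReal (1 / (d : ℝ) ^ 12) :=
  binomial_sqrt_concentration_general d hd δ hδ0 N hN0 hN p hp0 hp1 hpδ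
end

section
/- Let d ≥ 2 be an integer, N a positive integer, p ∈ [0,1], and q ∈ [0,1] with q ≥ 0.82·p and N·q ≥ 14.7·ln(d). Let X be a binomial random variable with parameters N and q. Then P[ X ≤ 0.41·N·p ] ≤ 1/d^{1.83}. -/
open Finset

example (N : ℕ) (k : Fin (N+1)) : ((Fin.last N - k : Fin (N+1)) : ℕ) = N - (k:ℕ) := by
  rw [Fin.coe_sub_iff_le.2 k.le_last, Fin.val_last]

lemma real_side (d N : ℕ) (hd : 2 ≤ d) (hN0 : 0 < N)
    (p : ℝ) (hp0 : 0 ≤ p) (hp1 : p ≤ 1)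
    (q : ℝ) (hq0 : 0 ≤ q) (hq1 : q ≤ 1)
    (hqp : 0.82 * p ≤ q) (hNq : 14.7 * Real.log d ≤ (N : ℝ) * q) :
    ∑ k ∈ (Finset.range (N+1)).filter (fun k : ℕ => (k:ℝ) ≤ 0.41 * (N:ℝ) * p),
      (q^k * (1-q)^(N-k) * (N.choose k : ℝ)) ≤ 1 / (d:ℝ)^(1.83:ℝ) := by
  set a : ℝ := 0.41 * (N:ℝ) * p with ha
  have ha0 : 0 ≤ a := by positivity
  have hld : 0 ≤ Real.log d := Real.log_nonneg (by exact_mod_cast Nat.one_le_of_lt hd)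
  have hterm : ∀ k ∈ (Finset.range (N+1)).filter (fun k : ℕ => (k:ℝ) ≤ a),
      q^k * (1-q)^(N-k) * (N.choose k : ℝ)
        ≤ (2:ℝ)^(a:ℝ) * ((q/2)^k * (1-q)^(N-k) * (N.choose k : ℝ)) := by
    intro k hk
    obtain ⟨-, hka⟩ := Finset.mem_filter.mp hk
    have h2k : (2:ℝ)^(k:ℕ) ≤ (2:ℝ)^(a:ℝ) := by
      rw [← Real.rpow_natCast 2 k]
      exact Real.rpow_le_rpow_left_iff (by norm_num) |>.2 hka
    have hq2 : q^k = (2:ℝ)^k * (q/2)^k := by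
      rw [← mul_pow]; ring_nf
    rw [hq2]
    have hnn : 0 ≤ (q/2)^k * (1-q)^(N-k) * (N.choose k : ℝ) :=
      mul_nonneg (mul_nonneg (pow_nonneg (by linarith) _) (pow_nonneg (by linarith) _))
        (Nat.cast_nonneg _)
    calc (2:ℝ)^k * (q/2)^k * (1-q)^(N-k) * (N.choose k : ℝ)
        = (2:ℝ)^k * ((q/2)^k * (1-q)^(N-k) * (N.choose k : ℝ)) := by ring
      _ ≤ (2:ℝ)^(a:ℝ) * ((q/2)^k * (1-q)^(N-k) * (N.choose k : ℝ)) :=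
          mul_le_mul_of_nonneg_right h2k hnn
  have hsum2 : ∑ k ∈ Finset.range (N+1), ((q/2)^k * (1-q)^(N-k) * (N.choose k : ℝ))
      = (1 - q/2)^N := by
    rw [← add_pow]; ring_nf
  calc ∑ k ∈ (Finset.range (N+1)).filter (fun k : ℕ => (k:ℝ) ≤ a),
        (q^k * (1-q)^(N-k) * (N.choose k : ℝ))
      ≤ ∑ k ∈ (Finset.range (N+1)).filter (fun k : ℕ => (k:ℝ) ≤ a),
        (2:ℝ)^(a:ℝ) * ((q/2)^k * (1-q)^(N-k) * (N.choose k : ℝ)) :=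
        Finset.sum_le_sum hterm
    _ = (2:ℝ)^(a:ℝ) * ∑ k ∈ (Finset.range (N+1)).filter (fun k : ℕ => (k:ℝ) ≤ a),
        ((q/2)^k * (1-q)^(N-k) * (N.choose k : ℝ)) := by rw [Finset.mul_sum]
    _ ≤ (2:ℝ)^(a:ℝ) * ∑ k ∈ Finset.range (N+1),
        ((q/2)^k * (1-q)^(N-k) * (N.choose k : ℝ)) := by
        apply mul_le_mul_of_nonneg_left _ (Real.rpow_nonneg (by norm_num) _)
        apply Finset.sum_le_sum_of_subset_of_nonneg (Finset.filter_subset _ _)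
        intro k _ _
        exact mul_nonneg (mul_nonneg (pow_nonneg (by linarith) _) (pow_nonneg (by linarith) _))
          (Nat.cast_nonneg _)
    _ = (2:ℝ)^(a:ℝ) * (1 - q/2)^N := by rw [hsum2]
    _ ≤ Real.exp (Real.log 2 * a) * Real.exp (-((N:ℝ) * q)/2) := by
        apply mul_le_mul
        · rw [Real.rpow_def_of_pos (by norm_num : (0:ℝ) < 2)]
        · calc (1 - q/2)^N ≤ (Real.exp (-(q/2)))^N := by
                apply pow_le_pow_left₀ (by linarith)
                linarith [Real.add_one_le_exp (-(q/2))]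
            _ = Real.exp (-((N:ℝ)*q)/2) := by
                rw [← Real.exp_nat_mul]; ring_nf
        · apply pow_nonneg; linarith
        · exact (Real.exp_pos _).le
    _ = Real.exp (Real.log 2 * a - ((N:ℝ)*q)/2) := by rw [← Real.exp_add]; ring_nf
    _ ≤ Real.exp (-(1.83 * Real.log d)) := by
        apply Real.exp_le_exp.2
        have hl2 : Real.log 2 < 0.6931471808 := Real.log_two_lt_d9
        have hl2' : 0 < Real.log 2 := Real.log_pos (by norm_num)
        have haq : a ≤ 0.5 * ((N:ℝ) * q) := by
          have : 0.41 * p ≤ 0.5 * q := by linarith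
          have hN : (0:ℝ) ≤ N := Nat.cast_nonneg N
          rw [ha]; nlinarith
        nlinarith [hNq, hld]
    _ = 1 / (d:ℝ)^(1.83:ℝ) := by
        rw [Real.rpow_def_of_pos (by positivity : (0:ℝ) < (d:ℝ))]
        rw [Real.exp_neg, mul_comm, one_div]

/-- **Sign-estimation failure probability.** If `X` is binomial with parameters `N` and `q`,
where `q ≥ 0.82·p` and `N·q ≥ 14.7·ln(d)`, then `P[X ≤ 0.41·N·p] ≤ 1/d^{1.83}`. -/
theorem binomial_sign_estimation
    (d : ℕ) (hd : 2 ≤ d) (N : ℕ) (hN0 : 0 < N)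
    (p : ℝ) (hp0 : 0 ≤ p) (hp1 : p ≤ 1)
    (q : ℝ) (hq0 : 0 ≤ q) (hq1 : q ≤ 1)
    (hqp : 0.82 * p ≤ q) (hNq : 14.7 * Real.log d ≤ (N : ℝ) * q) :
    (PMF.binomial (Real.toNNReal q) (Real.toNNReal_le_one.mpr hq1) N).toMeasure
      {k : Fin (N + 1) | ((k : ℕ) : ℝ) ≤ 0.41 * (N : ℝ) * p} ≤
      ENNReal.ofReal (1 / (d : ℝ) ^ (1.83 : ℝ)) := by
  have hmeas : MeasurableSet {k : Fin (N + 1) | ((k : ℕ) : ℝ) ≤ 0.41 * (N : ℝ) * p} :=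
    trivial
  rw [PMF.toMeasure_apply _ hmeas, tsum_fintype]
  have hpk : ∀ k : Fin (N + 1),
      PMF.binomial (Real.toNNReal q) (Real.toNNReal_le_one.mpr hq1) N k
        = ENNReal.ofReal (q ^ (k : ℕ) * (1 - q) ^ (N - (k : ℕ)) * (N.choose k : ℝ)) := by
    intro k
    rw [PMF.binomial_apply, Fin.val_last]
    have h0 : ((Real.toNNReal q : NNReal) : ENNReal) = ENNReal.ofReal q := rfl
    have h1 : (1 : ENNReal) - ENNReal.ofReal q = ENNReal.ofReal (1 - q) := by
      rw [ENNReal.ofReal_sub 1 hq0, ENNReal.ofReal_one]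
    rw [h0, h1, ← ENNReal.ofReal_pow hq0, ← ENNReal.ofReal_pow (by linarith),
      ← ENNReal.ofReal_natCast (N.choose k),
      ← ENNReal.ofReal_mul (by positivity),
      ← ENNReal.ofReal_mul (by
        exact mul_nonneg (pow_nonneg hq0 _) (pow_nonneg (by linarith) _))]
  have hind : ∀ k : Fin (N + 1),
      Set.indicator {k : Fin (N + 1) | ((k : ℕ) : ℝ) ≤ 0.41 * (N : ℝ) * p}
        (PMF.binomial (Real.toNNReal q) (Real.toNNReal_le_one.mpr hq1) N) k
      = (fun j : ℕ => if ((j : ℝ) ≤ 0.41 * (N : ℝ) * p) then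
          ENNReal.ofReal (q ^ j * (1 - q) ^ (N - j) * (N.choose j : ℝ)) else 0) (k : ℕ) := by
    intro k
    rw [Set.indicator_apply]
    simp only [Set.mem_setOf_eq, hpk k]
  calc ∑ k : Fin (N + 1), Set.indicator _ _ k
      = ∑ k ∈ Finset.range (N + 1), (fun j : ℕ => if ((j : ℝ) ≤ 0.41 * (N : ℝ) * p) then
          ENNReal.ofReal (q ^ j * (1 - q) ^ (N - j) * (N.choose j : ℝ)) else 0) k := by
        rw [← Fin.sum_univ_eq_sum_range]
        exact Finset.sum_congr rfl fun k _ => hind k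
    _ = ∑ k ∈ (Finset.range (N + 1)).filter (fun k : ℕ => (k : ℝ) ≤ 0.41 * (N : ℝ) * p),
          ENNReal.ofReal (q ^ k * (1 - q) ^ (N - k) * (N.choose k : ℝ)) :=
        (Finset.sum_filter _ _).symm
    _ = ENNReal.ofReal (∑ k ∈ (Finset.range (N + 1)).filter
          (fun k : ℕ => (k : ℝ) ≤ 0.41 * (N : ℝ) * p),
          (q ^ k * (1 - q) ^ (N - k) * (N.choose k : ℝ))) := by
        rw [ENNReal.ofReal_sum_of_nonneg]
        intro k _
        exact mul_nonneg (mul_nonneg (pow_nonneg hq0 _) (pow_nonneg (by linarith) _))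
          (Nat.cast_nonneg _)
    _ ≤ ENNReal.ofReal (1 / (d : ℝ) ^ (1.83 : ℝ)) :=
        ENNReal.ofReal_le_ofReal
          (real_side d N hd hN0 p hp0 hp1 q hq0 hq1 hqp hNq)
end

section
/- Let d ≥ 2 be an integer, δ ∈ (0,1), and let N be a positive integer with N ≥ 36·ln(d)/δ². Let x ∈ ℝ^d be a unit vector (‖x‖₂ = 1), and let ω_1, …, ω_N be independent random indices in {1,…,d}, each distributed so that P[ω_k = i] = x_i². For each i, let p_i = |{k : ω_k = i}|/N be the empirical frequency. Then with probability at least 1 − 1/d¹¹, for every i ∈ {1,…,d} one has | |x_i| − √(p_i) | ≤ (1 + √2)·δ. -/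
open MeasureTheory ProbabilityTheory
open scoped ENNReal

section TomoAux
open Real

/-- Core KL inequality: the optimized Chernoff factor for Bernoulli(q) at threshold r. -/
lemma tomo_kl_core {q r : ℝ} (hq0 : 0 < q) (hq1 : q < 1) (hr0 : 0 < r) (hr1 : r < 1) :
    ∃ t : ℝ, (q ≤ r → 0 ≤ t) ∧ (r ≤ q → t ≤ 0) ∧
      exp (-t * r) * (1 + (exp t - 1) * q) ≤ exp (-(sqrt r - sqrt q)^2) := by
  have h1q : (0:ℝ) < 1 - q := by linarith
  have h1r : (0:ℝ) < 1 - r := by linarith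
  have hA : (0:ℝ) < r * (1 - q) / (q * (1 - r)) := by positivity
  refine ⟨log (r * (1 - q) / (q * (1 - r))), ?_, ?_, ?_⟩
  · intro h
    apply log_nonneg
    rw [le_div_iff₀ (by positivity)]
    nlinarith
  · intro h
    apply log_nonpos hA.le
    rw [div_le_one (by positivity)]
    nlinarith
  · rw [exp_log hA]
    have hfac : 1 + (r * (1 - q) / (q * (1 - r)) - 1) * q = (1 - q) / (1 - r) := by
      field_simp
      ring
    rw [hfac]
    have hLpos : (0:ℝ) < (1 - q) / (1 - r) := by positivity
    rw [← Real.exp_log hLpos, ← Real.exp_add]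
    apply Real.exp_le_exp.mpr
    -- need : -log(A) * r + log((1-q)/(1-r)) ≤ -(√r - √q)^2
    rw [log_div (by positivity) (by positivity), log_div h1q.ne' h1r.ne',
        log_mul hr0.ne' h1q.ne', log_mul hq0.ne' h1r.ne']
    -- goal in terms of log r, log q, log (1-r), log (1-q)
    have key : r * (log r - log q) + (1 - r) * (log (1-r) - log (1-q)) ≥ (sqrt r - sqrt q)^2 := by
      have h2 : r * (log r - log q) ≥ 2 * (r - sqrt r * sqrt q) := by
        have hl : log (sqrt q / sqrt r) ≤ sqrt q / sqrt r - 1 :=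
          Real.log_le_sub_one_of_pos (by positivity)
        have h3 : log (sqrt q / sqrt r) = (log q - log r) / 2 := by
          rw [log_div (by positivity) (by positivity), Real.log_sqrt hq0.le,
            Real.log_sqrt hr0.le]; ring
        rw [h3] at hl
        have hsr : (0:ℝ) < sqrt r := Real.sqrt_pos.mpr hr0
        have h4 : sqrt q / sqrt r - 1 = (sqrt q * sqrt r - r) / r := by
          have hrr : sqrt r * sqrt r = r := Real.mul_self_sqrt hr0.le
          field_simp
          linear_combination (-1 : ℝ) * sqrt q * hrr
        rw [h4, div_le_div_iff₀ (by norm_num) hr0] at hl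
        nlinarith
      have h2' : (1 - r) * (log (1-r) - log (1-q)) ≥ 2 * ((1-r) - sqrt (1-r) * sqrt (1-q)) := by
        have hl : log (sqrt (1-q) / sqrt (1-r)) ≤ sqrt (1-q) / sqrt (1-r) - 1 :=
          Real.log_le_sub_one_of_pos (by positivity)
        have h3 : log (sqrt (1-q) / sqrt (1-r)) = (log (1-q) - log (1-r)) / 2 := by
          rw [log_div (by positivity) (by positivity), Real.log_sqrt h1q.le,
            Real.log_sqrt h1r.le]; ring
        rw [h3] at hl
        have h4 : sqrt (1-q) / sqrt (1-r) - 1 = (sqrt (1-q) * sqrt (1-r) - (1-r)) / (1-r) := by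
          have hrr : sqrt (1-r) * sqrt (1-r) = 1-r := Real.mul_self_sqrt h1r.le
          field_simp
          linear_combination (-1 : ℝ) * sqrt (1-q) * hrr
        rw [h4, div_le_div_iff₀ (by norm_num) h1r] at hl
        nlinarith
      have e1 : sqrt r ^ 2 = r := Real.sq_sqrt hr0.le
      have e2 : sqrt q ^ 2 = q := Real.sq_sqrt hq0.le
      have e3 : sqrt (1-r) ^ 2 = 1 - r := Real.sq_sqrt h1r.le
      have e4 : sqrt (1-q) ^ 2 = 1 - q := Real.sq_sqrt h1q.le
      nlinarith [sq_nonneg (sqrt (1-r) - sqrt (1-q))]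
    nlinarith

/-- Upper-tail Chernoff factor bound. -/
lemma tomo_upper {q δ : ℝ} (hq0 : 0 < q) (hδ0 : 0 < δ) (hδ1 : δ < 1)
    (hr : (sqrt q + δ)^2 ≤ 1) :
    ∃ t : ℝ, 0 ≤ t ∧
      exp (-t * (sqrt q + δ)^2) * (1 + (exp t - 1) * q) ≤ exp (-δ^2) := by
  set r := (sqrt q + δ)^2 with hrdef
  have hsq : 0 ≤ sqrt q := Real.sqrt_nonneg q
  have hsq1 : sqrt q + δ ≤ 1 := by
    nlinarith [sq_nonneg (sqrt q + δ - 1)]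
  have hq1 : q < 1 := by
    have : sqrt q < 1 := by linarith
    nlinarith [Real.sq_sqrt hq0.le]
  have hr0 : 0 < r := by positivity
  rcases lt_or_eq_of_le hr with hr1 | hr1
  · -- r < 1 : use the KL-optimal t
    obtain ⟨t, ht0, -, hbd⟩ := tomo_kl_core hq0 hq1 hr0 hr1
    have hqr : q ≤ r := by nlinarith [Real.sq_sqrt hq0.le]
    refine ⟨t, ht0 hqr, ?_⟩
    have hsr : sqrt r = sqrt q + δ := by
      rw [hrdef, Real.sqrt_sq (by positivity)]
    rw [hsr] at hbd
    convert hbd using 3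
    ring
  · -- r = 1
    have hgap : q < exp (-δ^2) := by
      have h1 : exp (-δ^2) > 1 - δ^2 := by
        have := Real.add_one_lt_exp (x := -δ^2) (by nlinarith)
        linarith
      have h2 : sqrt q = 1 - δ := by nlinarith
      nlinarith [Real.sq_sqrt hq0.le]
    have h1q : 0 < 1 - q := by
      nlinarith [Real.exp_le_one_iff.mpr (show -δ^2 ≤ 0 by nlinarith)]
    set g := exp (-δ^2) - q with hg
    have hg0 : 0 < g := by linarith
    refine ⟨log ((1-q)/g), ?_, ?_⟩
    · apply log_nonneg
      rw [le_div_iff₀ hg0]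
      have : exp (-δ^2) ≤ 1 := Real.exp_le_one_iff.mpr (by nlinarith)
      simp only [hg]; linarith
    · rw [hr1, mul_one]
      have he : exp (log ((1-q)/g)) = (1-q)/g := Real.exp_log (by positivity)
      have heq : exp (-log ((1-q)/g)) * (1 + (exp (log ((1-q)/g)) - 1) * q) = q + g := by
        rw [Real.exp_neg, he]
        field_simp
        ring
      rw [heq]
      simp [hg]

/-- Lower-tail Chernoff factor bound. -/
lemma tomo_lower {q δ : ℝ} (hδ0 : 0 < δ) (hδq : δ ≤ sqrt q) (hq1 : q < 1) :
    ∃ t : ℝ, t ≤ 0 ∧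
      exp (-t * (sqrt q - δ)^2) * (1 + (exp t - 1) * q) ≤ exp (-δ^2) := by
  have hsq : 0 ≤ sqrt q := Real.sqrt_nonneg q
  have hq0 : 0 < q := by
    by_contra h
    push_neg at h
    rw [Real.sqrt_eq_zero'.mpr h] at hδq
    linarith
  set r := (sqrt q - δ)^2 with hrdef
  have hqq : sqrt q * sqrt q = q := Real.mul_self_sqrt hq0.le
  rcases lt_or_eq_of_le hδq with hlt | heq
  · have hr0 : 0 < r := by nlinarith
    have hr1 : r < 1 := by nlinarith
    obtain ⟨t, -, ht0, hbd⟩ := tomo_kl_core hq0 hq1 hr0 hr1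
    have hrq : r ≤ q := by nlinarith
    refine ⟨t, ht0 hrq, ?_⟩
    have hsr : sqrt r = sqrt q - δ := by
      rw [hrdef, Real.sqrt_sq (by linarith)]
    rw [hsr] at hbd
    convert hbd using 3
    ring
  · -- δ = √q, r = 0
    have hqd : q = δ^2 := by nlinarith
    have hgap : 1 - q < exp (-δ^2) := by
      have := Real.add_one_lt_exp (x := -δ^2) (by nlinarith)
      linarith
    have hub : exp (-δ^2) - (1 - q) ≤ q := by
      have : exp (-δ^2) ≤ 1 := Real.exp_le_one_iff.mpr (by nlinarith)
      linarith
    refine ⟨log ((exp (-δ^2) - (1-q))/q), ?_, ?_⟩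
    · apply log_nonpos (div_nonneg (by linarith) hq0.le)
      rw [div_le_one hq0]
      exact hub
    · have hr0 : r = 0 := by rw [hrdef, ← heq]; ring_nf
      rw [hr0, mul_zero, Real.exp_zero, one_mul,
        Real.exp_log (div_pos (by linarith) hq0)]
      field_simp
      linarith

end TomoAux

lemma tomo_chernoff {Ω : Type*} [MeasurableSpace Ω] (μ : Measure Ω) [IsProbabilityMeasure μ]
    {d N : ℕ} (ω : Fin N → Ω → Fin d)
    (hmeas : ∀ k, Measurable (ω k))
    (hindep : iIndepFun ω μ)
    (i : Fin d) {q : ℝ} (hq0 : 0 ≤ q)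
    (hdist : ∀ k, μ {a | ω k a = i} = ENNReal.ofReal q)
    (t c : ℝ) (upper : Bool) (ht : if upper then 0 ≤ t else t ≤ 0) :
    μ {a | if upper then c ≤ ∑ k, (if ω k a = i then (1:ℝ) else 0)
           else (∑ k, (if ω k a = i then (1:ℝ) else 0)) ≤ c} ≤
      ENNReal.ofReal (Real.exp (-t * c) * (1 + (Real.exp t - 1) * q) ^ N) := by
  classical
  set Y : Fin N → Ω → ℝ := fun k a => if ω k a = i then (1:ℝ) else 0 with hY
  have hg : Measurable (fun j : Fin d => if j = i then (1:ℝ) else 0) := by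
    exact measurable_from_top
  have hYmeas : ∀ k, Measurable (Y k) := fun k => hg.comp (hmeas k)
  have hYindep : iIndepFun Y μ :=
    hindep.comp (fun _ j => if j = i then (1:ℝ) else 0) (fun _ => hg)
  have hSmeas : ∀ k, MeasurableSet {a | ω k a = i} :=
    fun k => hmeas k (measurableSet_singleton i)
  have hrepr : ∀ k, (fun a => Real.exp (t * Y k a)) =
      fun a => Set.indicator {a | ω k a = i} (fun _ => Real.exp t - 1) a + 1 := by
    intro k
    funext a
    by_cases h : ω k a = i
    · simp [hY, h, Set.indicator_of_mem (by exact h : a ∈ {a | ω k a = i})]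
    · simp [hY, h, Set.indicator_of_notMem (by exact h : a ∉ {a | ω k a = i})]
  have hint : ∀ k, Integrable (fun a => Real.exp (t * Y k a)) μ := by
    intro k
    rw [hrepr k]
    exact ((integrable_const _).indicator (hSmeas k)).add (integrable_const 1)
  have hmgfk : ∀ k, mgf (Y k) μ t = 1 + (Real.exp t - 1) * q := by
    intro k
    rw [mgf, hrepr k, integral_add ((integrable_const _).indicator (hSmeas k)) (integrable_const 1),
      integral_indicator_const _ (hSmeas k), integral_const]
    simp [measureReal_def, hdist k, ENNReal.toReal_ofReal hq0, measure_univ]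
    ring
  have hintsum : Integrable (fun a => Real.exp (t * (∑ k, Y k) a)) μ :=
    hYindep.integrable_exp_mul_sum hYmeas (fun k _ => hint k)
  have hmgfS : mgf (∑ k, Y k) μ t = (1 + (Real.exp t - 1) * q) ^ N := by
    rw [hYindep.mgf_sum hYmeas Finset.univ]
    simp [hmgfk, Finset.prod_const, Finset.card_univ]
  have happ : ∀ a, (∑ k, Y k) a = ∑ k, Y k a := fun a => Finset.sum_apply a Finset.univ Y
  have hbd : (μ {a | if upper then c ≤ ∑ k, Y k a else (∑ k, Y k a) ≤ c}).toReal ≤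
      Real.exp (-t * c) * (1 + (Real.exp t - 1) * q) ^ N := by
    cases upper with
    | true =>
        simp only [if_true]
        have := measure_ge_le_exp_mul_mgf (μ := μ) (X := ∑ k, Y k) c (by simpa using ht) hintsum
        rw [hmgfS] at this
        simpa [happ, measureReal_def] using this
    | false =>
        simp only [Bool.false_eq_true, if_false]
        have := measure_le_le_exp_mul_mgf (μ := μ) (X := ∑ k, Y k) c (by simpa using ht) hintsum
        rw [hmgfS] at this
        simpa [happ, measureReal_def] using this
  calc μ _ ≤ ENNReal.ofReal ((μ {a | if upper then c ≤ ∑ k, Y k a else (∑ k, Y k a) ≤ c}).toReal) := by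
        rw [ENNReal.ofReal_toReal (measure_ne_top μ _)]
      _ ≤ _ := ENNReal.ofReal_le_ofReal hbd

/-- **ℓ∞ magnitude estimation for vector state tomography.** Measuring `N ≥ 36 ln(d)/δ²`
copies of the unit-vector state `|x⟩` in the standard basis (i.e. drawing `N` independent
indices with `P[ω_k = i] = x_i²`) and letting `p_i` be the empirical frequency of outcome `i`,
with probability at least `1 - 1/d¹¹` every coordinate satisfies
`||x_i| - √(p_i)| ≤ (1+√2)δ`. -/
theorem tomography_magnitude_estimation
    (d : ℕ) (hd : 2 ≤ d) (δ : ℝ) (hδ0 : 0 < δ) (hδ1 : δ < 1)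
    (N : ℕ) (hN0 : 0 < N) (hN : 36 * Real.log d / δ ^ 2 ≤ (N : ℝ))
    (x : EuclideanSpace ℝ (Fin d)) (hx : ‖x‖ = 1)
    {Ω : Type*} [MeasurableSpace Ω] (μ : Measure Ω) [IsProbabilityMeasure μ]
    (ω : Fin N → Ω → Fin d)
    (hmeas : ∀ k, Measurable (ω k))
    (hindep : iIndepFun ω μ)
    (hdist : ∀ k i, μ {a | ω k a = i} = ENNReal.ofReal ((x i) ^ 2))
    (pemp : Fin d → Ω → ℝ)
    (hpemp : ∀ i a,
      pemp i a = ((Finset.univ.filter (fun k => ω k a = i)).card : ℝ) / (N : ℝ)) :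
    ENNReal.ofReal (1 - 1 / (d : ℝ) ^ 11) ≤
      μ {a | ∀ i, |(|x i| - Real.sqrt (pemp i a))| ≤ (1 + Real.sqrt 2) * δ} := by
  classical
  have hNR : (0:ℝ) < N := by exact_mod_cast hN0
  set q : Fin d → ℝ := fun i => (x i)^2 with hqdef
  have hq0 : ∀ i, 0 ≤ q i := fun i => sq_nonneg _
  have hq1 : ∀ i, q i ≤ 1 := by
    intro i
    have h := hdist ⟨0, hN0⟩ i
    have hle : μ {a | ω ⟨0, hN0⟩ a = i} ≤ 1 := prob_le_one
    rw [h] at hle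
    exact ENNReal.ofReal_le_one.mp hle
  set S : Fin d → Ω → ℝ := fun i a => ∑ k, (if ω k a = i then (1:ℝ) else 0) with hSdef
  have hS0 : ∀ i a, 0 ≤ S i a := fun i a =>
    Finset.sum_nonneg (fun k _ => by positivity)
  have hSN : ∀ i a, S i a ≤ N := by
    intro i a
    calc S i a ≤ ∑ _k : Fin N, (1:ℝ) := Finset.sum_le_sum (fun k _ => by
          split <;> norm_num)
      _ = N := by simp
  have hpS : ∀ i a, pemp i a = S i a / N := by
    intro i a
    rw [hpemp i a]
    congr 1
    rw [Finset.card_filter]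
    push_cast
    rfl
  have hSmeas : ∀ i, Measurable (S i) := by
    intro i
    apply Finset.measurable_sum
    intro k _
    exact (measurable_from_top (f := fun j : Fin d => if j = i then (1:ℝ) else 0)).comp (hmeas k)
  -- bad events
  set Bu : Fin d → Set Ω := fun i => {a | (N:ℝ) * (Real.sqrt (q i) + δ)^2 ≤ S i a} with hBudef
  set Bl : Fin d → Set Ω := fun i =>
    if δ ≤ Real.sqrt (q i) then {a | S i a ≤ (N:ℝ) * (Real.sqrt (q i) - δ)^2} else ∅ with hBldef
  have hBumeas : ∀ i, MeasurableSet (Bu i) :=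
    fun i => measurableSet_le measurable_const (hSmeas i)
  have hBlmeas : ∀ i, MeasurableSet (Bl i) := by
    intro i
    have hrfl : Bl i = if δ ≤ Real.sqrt (q i) then
        {a | S i a ≤ (N:ℝ) * (Real.sqrt (q i) - δ)^2} else ∅ := rfl
    rw [hrfl]
    split
    · exact measurableSet_le (hSmeas i) measurable_const
    · exact MeasurableSet.empty
  have hEbound : ENNReal.ofReal (Real.exp (-((N:ℝ) * δ^2))) ≤
      ENNReal.ofReal (Real.exp (-((N:ℝ) * δ^2))) := le_refl _
  -- the per-tail bound
  have key : ∀ (i : Fin d) (t c : ℝ) (upper : Bool), (if upper then 0 ≤ t else t ≤ 0) →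
      Real.exp (-t * (c / N)) * (1 + (Real.exp t - 1) * q i) ≤ Real.exp (-δ^2) →
      μ {a | if upper then c ≤ S i a else S i a ≤ c} ≤
        ENNReal.ofReal (Real.exp (-((N:ℝ) * δ^2))) := by
    intro i t c upper ht hfac
    have h1 := tomo_chernoff μ ω hmeas hindep i (hq0 i) (fun k => hdist k i) t c upper ht
    refine h1.trans (ENNReal.ofReal_le_ofReal ?_)
    have hM : 0 ≤ Real.exp (-t * (c/N)) * (1 + (Real.exp t - 1) * q i) := by
      have h1 : (0:ℝ) ≤ 1 + (Real.exp t - 1) * q i := by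
        nlinarith [mul_nonneg (Real.exp_pos t).le (hq0 i), hq0 i, hq1 i]
      exact mul_nonneg (Real.exp_pos _).le h1
    calc Real.exp (-t * c) * (1 + (Real.exp t - 1) * q i) ^ N
        = (Real.exp (-t * (c/N)) * (1 + (Real.exp t - 1) * q i)) ^ N := by
          rw [mul_pow, ← Real.exp_nat_mul]
          congr 2
          field_simp
      _ ≤ (Real.exp (-δ^2)) ^ N := by
          apply pow_le_pow_left₀ hM hfac
      _ = Real.exp (-((N:ℝ) * δ^2)) := by
          rw [← Real.exp_nat_mul]
          congr 1
          ring
  -- upper tail bound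
  have hBu : ∀ i, μ (Bu i) ≤ ENNReal.ofReal (Real.exp (-((N:ℝ) * δ^2))) := by
    intro i
    rcases eq_or_lt_of_le (hq0 i) with hqi | hqi
    · -- q i = 0 : Bu i is contained in a null set
      have hsub : Bu i ⊆ ⋃ k, {a | ω k a = i} := by
        intro a ha
        simp only [hBudef, Set.mem_setOf_eq] at ha
        by_contra hnot
        simp only [Set.mem_iUnion, Set.mem_setOf_eq, not_exists] at hnot
        have : S i a = 0 := Finset.sum_eq_zero (fun k _ => by simp [hnot k])
        rw [this] at ha
        have : Real.sqrt (q i) = 0 := by rw [← hqi]; exact Real.sqrt_zero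
        rw [this] at ha
        nlinarith [mul_pos hNR (mul_pos hδ0 hδ0)]
      have h1 : ∀ k, μ {a | ω k a = i} = 0 := fun k => by
        rw [hdist k i, show (x i)^2 = q i from rfl, ← hqi]
        simp
      have h0 : μ (Bu i) = 0 := measure_mono_null hsub (measure_iUnion_null h1)
      rw [h0]
      exact bot_le
    · rcases le_or_gt ((Real.sqrt (q i) + δ)^2) 1 with hr1 | hr1
      · obtain ⟨t, ht0, hfac⟩ := tomo_upper hqi hδ0 hδ1 hr1
        have := key i t ((N:ℝ) * (Real.sqrt (q i) + δ)^2) true (by simpa using ht0) (by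
          rw [mul_comm (N:ℝ) _, mul_div_assoc, div_self hNR.ne', mul_one]
          exact hfac)
        simpa [hBudef] using this
      · have : Bu i = ∅ := by
          ext a
          simp only [hBudef, Set.mem_setOf_eq, Set.mem_empty_iff_false, iff_false, not_le]
          have := hSN i a
          nlinarith
        rw [this]
        simp
  -- lower tail bound
  have hBl : ∀ i, μ (Bl i) ≤ ENNReal.ofReal (Real.exp (-((N:ℝ) * δ^2))) := by
    intro i
    have hrfl : Bl i = if δ ≤ Real.sqrt (q i) then
        {a | S i a ≤ (N:ℝ) * (Real.sqrt (q i) - δ)^2} else ∅ := rfl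
    rw [hrfl]
    split
    · rename_i hδq
      rcases eq_or_lt_of_le (hq1 i) with hqi | hqi
      · -- q i = 1
        have hsub : {a | S i a ≤ (N:ℝ) * (Real.sqrt (q i) - δ)^2} ⊆
            ⋃ k, {a | ω k a = i}ᶜ := by
          intro a ha
          simp only [Set.mem_setOf_eq] at ha
          by_contra hnot
          simp only [Set.mem_iUnion, Set.mem_compl_iff, Set.mem_setOf_eq, not_exists,
            not_not] at hnot
          have hSa : S i a = N := by
            rw [hSdef]
            simp only [hnot]
            simp
          have hsq1 : Real.sqrt (q i) = 1 := by rw [hqi, Real.sqrt_one]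
          rw [hSa, hsq1] at ha
          nlinarith [mul_pos hNR (mul_pos hδ0 (show (0:ℝ) < 2 - δ by linarith))]
        have hnull : ∀ k, μ ({a | ω k a = i}ᶜ) = 0 := by
          intro k
          have hms : MeasurableSet {a | ω k a = i} := hmeas k (measurableSet_singleton i)
          rw [measure_compl hms (measure_ne_top μ _), hdist k i,
            show (x i)^2 = q i from rfl, hqi]
          simp
        have h0 : μ {a | S i a ≤ (N:ℝ) * (Real.sqrt (q i) - δ)^2} = 0 :=
          measure_mono_null hsub (measure_iUnion_null hnull)
        rw [h0]
        exact bot_le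
      · obtain ⟨t, ht0, hfac⟩ := tomo_lower hδ0 hδq hqi
        have := key i t ((N:ℝ) * (Real.sqrt (q i) - δ)^2) false (by simpa using ht0) (by
          rw [mul_comm (N:ℝ) _, mul_div_assoc, div_self hNR.ne', mul_one]
          exact hfac)
        simpa using this
    · simp
  -- union bound
  set F : Set Ω := ⋃ i, (Bu i ∪ Bl i) with hFdef
  have hFmeas : MeasurableSet F :=
    MeasurableSet.iUnion (fun i => (hBumeas i).union (hBlmeas i))
  have hdR : (2:ℝ) ≤ d := by exact_mod_cast hd
  have hd0 : (0:ℝ) < d := by linarith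
  have hμF : μ F ≤ ENNReal.ofReal (1 / (d:ℝ)^11) := by
    have h1 : μ F ≤ ∑' i : Fin d, μ (Bu i ∪ Bl i) := measure_iUnion_le _
    have h2 : ∀ i : Fin d, μ (Bu i ∪ Bl i) ≤
        ENNReal.ofReal (2 * Real.exp (-((N:ℝ) * δ^2))) := by
      intro i
      calc μ (Bu i ∪ Bl i) ≤ μ (Bu i) + μ (Bl i) := measure_union_le _ _
        _ ≤ ENNReal.ofReal (Real.exp (-((N:ℝ) * δ^2))) +
            ENNReal.ofReal (Real.exp (-((N:ℝ) * δ^2))) := add_le_add (hBu i) (hBl i)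
        _ = ENNReal.ofReal (2 * Real.exp (-((N:ℝ) * δ^2))) := by
            rw [← ENNReal.ofReal_add (by positivity) (by positivity)]
            ring_nf
    have h3 : μ F ≤ (d : ℝ≥0∞) * ENNReal.ofReal (2 * Real.exp (-((N:ℝ) * δ^2))) := by
      refine h1.trans ?_
      calc ∑' i : Fin d, μ (Bu i ∪ Bl i)
          ≤ ∑' _i : Fin d, ENNReal.ofReal (2 * Real.exp (-((N:ℝ) * δ^2))) :=
            ENNReal.tsum_le_tsum h2
        _ = (d : ℝ≥0∞) * ENNReal.ofReal (2 * Real.exp (-((N:ℝ) * δ^2))) := by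
            rw [tsum_fintype]
            simp [Finset.card_univ, mul_comm]
    refine h3.trans ?_
    rw [show ((d:ℝ≥0∞)) = ENNReal.ofReal d by simp [ENNReal.ofReal_natCast],
      ← ENNReal.ofReal_mul (by positivity)]
    apply ENNReal.ofReal_le_ofReal
    -- real inequality : d * (2 * exp(-(N δ²))) ≤ 1/d^11
    have hNd : 36 * Real.log d ≤ (N:ℝ) * δ^2 := by
      rw [div_le_iff₀ (by positivity)] at hN
      linarith
    have hexp : Real.exp (-((N:ℝ) * δ^2)) ≤ 1 / (d:ℝ)^36 := by
      rw [le_div_iff₀ (by positivity), ← Real.exp_log (show (0:ℝ) < (d:ℝ)^36 by positivity)]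
      rw [← Real.exp_add]
      rw [Real.log_pow]
      apply Real.exp_le_one_iff.mpr
      push_cast
      linarith
    have h24 : (2:ℝ) ≤ (d:ℝ)^24 := by
      calc (2:ℝ) ≤ 2^24 := by norm_num
        _ ≤ (d:ℝ)^24 := pow_le_pow_left₀ (by norm_num) hdR 24
    rw [le_div_iff₀ (by positivity)]
    calc (d:ℝ) * (2 * Real.exp (-((N:ℝ) * δ^2))) * (d:ℝ)^11
        ≤ (d:ℝ) * (2 * (1/(d:ℝ)^36)) * (d:ℝ)^11 := by
          apply mul_le_mul_of_nonneg_right _ (by positivity)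
          apply mul_le_mul_of_nonneg_left _ (by positivity)
          apply mul_le_mul_of_nonneg_left hexp (by norm_num)
      _ = 2 * (d:ℝ)^12 / (d:ℝ)^36 := by ring
      _ ≤ (d:ℝ)^24 * (d:ℝ)^12 / (d:ℝ)^36 := by
          apply div_le_div_of_nonneg_right _ (by positivity)
          · exact mul_le_mul_of_nonneg_right h24 (by positivity)
      _ = 1 := by field_simp
  -- complement inclusion
  have hsub : Fᶜ ⊆ {a | ∀ i, |(|x i| - Real.sqrt (pemp i a))| ≤ (1 + Real.sqrt 2) * δ} := by
    intro a ha i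
    simp only [hFdef, Set.mem_compl_iff, Set.mem_iUnion, not_exists, Set.mem_union,
      not_or] at ha
    have hau : ∀ j, a ∉ Bu j := fun j => (ha j).1
    have hal : ∀ j, a ∉ Bl j := fun j => (ha j).2
    have hxq : |x i| = Real.sqrt (q i) := (Real.sqrt_sq_eq_abs (x i)).symm
    have hp0 : 0 ≤ pemp i a := by
      rw [hpS]
      positivity
    have hkey : |(|x i| - Real.sqrt (pemp i a))| ≤ δ := by
      by_contra habs
      push_neg at habs
      rcases lt_abs.mp habs with h1 | h1
      · -- |x i| - √p > δ, lower deviation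
        have hδq : δ < Real.sqrt (q i) := by
          have := Real.sqrt_nonneg (pemp i a)
          rw [hxq] at h1
          linarith
        have hpl : Real.sqrt (pemp i a) < Real.sqrt (q i) - δ := by
          rw [hxq] at h1; linarith
        have hple : pemp i a ≤ (Real.sqrt (q i) - δ)^2 := by
          have h2 : (Real.sqrt (pemp i a))^2 ≤ (Real.sqrt (q i) - δ)^2 := by
            apply sq_le_sq' _ hpl.le
            have := Real.sqrt_nonneg (pemp i a)
            linarith
          rwa [Real.sq_sqrt hp0] at h2
        have hmem : a ∈ Bl i := by
          have hrfl : Bl i = if δ ≤ Real.sqrt (q i) then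
              {a | S i a ≤ (N:ℝ) * (Real.sqrt (q i) - δ)^2} else ∅ := rfl
          rw [hrfl, if_pos hδq.le]
          simp only [Set.mem_setOf_eq]
          have : S i a = pemp i a * N := by rw [hpS]; field_simp
          rw [this]
          calc pemp i a * N ≤ (Real.sqrt (q i) - δ)^2 * N :=
                mul_le_mul_of_nonneg_right hple (by positivity)
            _ = (N:ℝ) * (Real.sqrt (q i) - δ)^2 := by ring
        exact hal i hmem
      · -- √p - |x i| > δ, upper deviation
        have hpu : Real.sqrt (q i) + δ < Real.sqrt (pemp i a) := by
          rw [hxq] at h1; linarith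
        have hpge : (Real.sqrt (q i) + δ)^2 ≤ pemp i a := by
          have h2 : (Real.sqrt (q i) + δ)^2 ≤ (Real.sqrt (pemp i a))^2 := by
            apply sq_le_sq' _ hpu.le
            have := Real.sqrt_nonneg (pemp i a)
            have := Real.sqrt_nonneg (q i)
            linarith
          rwa [Real.sq_sqrt hp0] at h2
        have hmem : a ∈ Bu i := by
          show (N:ℝ) * (Real.sqrt (q i) + δ)^2 ≤ S i a
          have : S i a = pemp i a * N := by rw [hpS]; field_simp
          rw [this]
          calc (N:ℝ) * (Real.sqrt (q i) + δ)^2 = (Real.sqrt (q i) + δ)^2 * N := by ring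
            _ ≤ pemp i a * N := mul_le_mul_of_nonneg_right hpge (by positivity)
        exact hau i hmem
    refine hkey.trans ?_
    have h2 : (0:ℝ) ≤ Real.sqrt 2 := Real.sqrt_nonneg 2
    nlinarith
  -- conclude
  calc ENNReal.ofReal (1 - 1 / (d:ℝ)^11)
      = 1 - ENNReal.ofReal (1 / (d:ℝ)^11) := by
        rw [← ENNReal.ofReal_one, ← ENNReal.ofReal_sub _ (by positivity)]
    _ ≤ 1 - μ F := tsub_le_tsub_left hμF 1
    _ = μ Fᶜ := (prob_compl_eq_one_sub hFmeas).symm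
    _ ≤ _ := measure_mono hsub
end
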